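/- arXiv:2603.02920 — 2 statements merged into one kernel-verified Lean document; each statement's English description precedes it below -/
import Mathlib

section
/- For all real numbers a, b and every real p with 1 < p ≤ 2, one has |(a-b)/2|^p + |(a+b)/2|^p ≤ 2^(1-p) (|a|^p + |b|^p). -/
/-!
Write `|t| ^ p = (t ^ 2) ^ (p / 2)` and put `r = p / 2 ∈ [0, 1]`. Concavity of `s ↦ s ^ r` bounds
the left side by `2 ^ (1 - r)` times the `r`-th power of `((a - b) / 2) ^ 2 + ((a + b) / 2) ^ 2`,
which by the parallelogram identity is `(a ^ 2 + b ^ 2) / 2`; subadditivity of `s ↦ s ^ r` then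
gives `(a ^ 2 + b ^ 2) ^ r ≤ |a| ^ p + |b| ^ p`.
-/

open Real

lemma rpow_add_rpow_le_two_rpow_mul_rpow_add {x y r : ℝ} (hx : 0 ≤ x) (hy : 0 ≤ y)
    (hr₀ : 0 ≤ r) (hr₁ : r ≤ 1) : x ^ r + y ^ r ≤ 2 ^ (1 - r) * (x + y) ^ r := by
  have hmid := (concaveOn_rpow hr₀ hr₁).2 (Set.mem_Ici.2 hx) (Set.mem_Ici.2 hy)
    (by norm_num : (0 : ℝ) ≤ 2⁻¹) (by norm_num : (0 : ℝ) ≤ 2⁻¹) (by norm_num : (2 : ℝ)⁻¹ + 2⁻¹ = 1)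
  simp only [smul_eq_mul, ← mul_add, mul_rpow (by norm_num : (0 : ℝ) ≤ 2⁻¹) (add_nonneg hx hy)]
    at hmid
  calc x ^ r + y ^ r = 2 * (2⁻¹ * (x ^ r + y ^ r)) := by ring
    _ ≤ 2 * (2⁻¹ ^ r * (x + y) ^ r) := by gcongr
    _ = 2 ^ (1 - r) * (x + y) ^ r := by
        rw [inv_rpow zero_le_two, rpow_sub two_pos, rpow_one]
        ring

lemma abs_rpow_eq_sq_rpow_half (t p : ℝ) : |t| ^ p = (t ^ 2) ^ (p / 2) := by
  rw [← sq_abs, ← rpow_natCast, ← rpow_mul (abs_nonneg t)]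
  ring_nf

lemma half_sub_sq_add_half_add_sq (a b : ℝ) :
    ((a - b) / 2) ^ 2 + ((a + b) / 2) ^ 2 = (a ^ 2 + b ^ 2) / 2 := by
  ring

/-- Clarkson-type inequality, case `1 < p ≤ 2`. -/
theorem clarkson_le_two (a b p : ℝ) (hp1 : 1 < p) (hp2 : p ≤ 2) :
    |(a - b) / 2| ^ p + |(a + b) / 2| ^ p ≤ 2 ^ (1 - p) * (|a| ^ p + |b| ^ p) := by
  set r := p / 2 with hr
  have hr₀ : 0 ≤ r := by linarith
  have hr₁ : r ≤ 1 := by linarith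
  have h2p : (2 : ℝ) ^ p = 2 ^ r * 2 ^ r := by rw [← rpow_add two_pos, hr, add_halves]
  simp only [abs_rpow_eq_sq_rpow_half _ p, ← hr]
  calc (((a - b) / 2) ^ 2) ^ r + (((a + b) / 2) ^ 2) ^ r
      ≤ 2 ^ (1 - r) * ((a ^ 2 + b ^ 2) / 2) ^ r := by
        rw [← half_sub_sq_add_half_add_sq]
        exact rpow_add_rpow_le_two_rpow_mul_rpow_add (sq_nonneg _) (sq_nonneg _) hr₀ hr₁
    _ = 2 ^ (1 - p) * (a ^ 2 + b ^ 2) ^ r := by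
        rw [div_rpow (by positivity) zero_le_two, rpow_sub two_pos, rpow_sub two_pos, h2p]
        field_simp
    _ ≤ 2 ^ (1 - p) * ((a ^ 2) ^ r + (b ^ 2) ^ r) := by
        gcongr
        exact rpow_add_le_add_rpow (sq_nonneg a) (sq_nonneg b) hr₀ hr₁
end

section
/- For all real numbers a, b and every real p with 2 ≤ p < ∞, one has |(a-b)/2|^p + |(a+b)/2|^p ≤ (1/2)(|a|^p + |b|^p). -/
/-!
Write `|t| ^ p = (t ^ 2) ^ (p / 2)` with `q = p / 2 ≥ 1`. The parallelogram identity gives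
`((a - b) / 2) ^ 2 + ((a + b) / 2) ^ 2 = (a ^ 2 + b ^ 2) / 2`, so superadditivity of `s ↦ s ^ q`
bounds the left side by `((a ^ 2 + b ^ 2) / 2) ^ q`, and convexity of `s ↦ s ^ q` bounds that by
`((a ^ 2) ^ q + (b ^ 2) ^ q) / 2`.
-/

namespace Real

lemma abs_rpow_eq_sq_rpow_div_two (t p : ℝ) : |t| ^ p = (t ^ 2) ^ (p / 2) := by
  rw [← sq_abs, ← rpow_natCast, ← rpow_mul (abs_nonneg t)]
  congr 1
  ring

lemma rpow_add_div_two_le {x y q : ℝ} (hx : 0 ≤ x) (hy : 0 ≤ y) (hq : 1 ≤ q) :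
    ((x + y) / 2) ^ q ≤ (x ^ q + y ^ q) / 2 := by
  have h := (convexOn_rpow hq).2 (Set.mem_Ici.2 hx) (Set.mem_Ici.2 hy)
    (by norm_num : (0 : ℝ) ≤ 1 / 2) (by norm_num : (0 : ℝ) ≤ 1 / 2) (add_halves 1)
  simp only [smul_eq_mul] at h
  calc ((x + y) / 2) ^ q = (1 / 2 * x + 1 / 2 * y) ^ q := by ring_nf
    _ ≤ 1 / 2 * x ^ q + 1 / 2 * y ^ q := h
    _ = (x ^ q + y ^ q) / 2 := by ring

end Real

/-- Clarkson-type inequality, case `2 ≤ p`. -/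
theorem clarkson_ge_two (a b p : ℝ) (hp : 2 ≤ p) :
    |(a - b) / 2| ^ p + |(a + b) / 2| ^ p ≤ (1 / 2) * (|a| ^ p + |b| ^ p) := by
  have hq : 1 ≤ p / 2 := by linarith
  simp only [Real.abs_rpow_eq_sq_rpow_div_two]
  calc (((a - b) / 2) ^ 2) ^ (p / 2) + (((a + b) / 2) ^ 2) ^ (p / 2)
      ≤ (((a - b) / 2) ^ 2 + ((a + b) / 2) ^ 2) ^ (p / 2) :=
        Real.add_rpow_le_rpow_add (sq_nonneg _) (sq_nonneg _) hq
    _ = ((a ^ 2 + b ^ 2) / 2) ^ (p / 2) := by ring_nf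
    _ ≤ ((a ^ 2) ^ (p / 2) + (b ^ 2) ^ (p / 2)) / 2 :=
        Real.rpow_add_div_two_le (sq_nonneg _) (sq_nonneg _) hq
    _ = 1 / 2 * ((a ^ 2) ^ (p / 2) + (b ^ 2) ^ (p / 2)) := by ring
end
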